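/- arXiv:2203.12765 — 3 statements merged into one kernel-verified Lean document; each statement's English description precedes it below -/
import Mathlib

section
/- Let X be a Banach space and τ a coarser Hausdorff locally convex topology on X such that the τ-continuous dual (X,τ)' is norming for X. Then a sequence (x_n) in X converges in the mixed topology γ = γ(‖·‖, τ) if and only if it converges in τ and is norm-bounded. -/
noncomputable section

open Filter Topology

/-- The norm dual `X' = X →L[ℝ] ℝ` of `X` (with the operator norm); the topology on `X`
here is the norm topology, irrespective of any other topology in scope. -/
abbrev wDualR (X : Type*) [NormedAddCommGroup X] [NormedSpace ℝ X] : Type _ := X →L[ℝ] ℝ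

/-- A sequence is Cauchy with respect to a given (group) topology `t`. -/
def SeqCauchyIn {X : Type*} [AddCommGroup X] (t : TopologicalSpace X) (u : ℕ → X) : Prop :=
  ∀ U ∈ @nhds X t 0, ∃ N : ℕ, ∀ m ≥ N, ∀ n ≥ N, u m - u n ∈ U

/-- `γ` is the mixed topology `γ(‖·‖, τ)`: the finest linear topology agreeing with `τ` on
norm-bounded sets and lying between `τ` and the norm topology. -/
structure IsMixedTopology (X : Type*) [NormedAddCommGroup X] [NormedSpace ℝ X]
    (τ γ : TopologicalSpace X) : Prop where
  le_tau : γ ≤ τ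
  norm_le : (UniformSpace.toTopologicalSpace : TopologicalSpace X) ≤ γ
  addGroup : @IsTopologicalAddGroup X γ _
  contSMul : @ContinuousSMul ℝ X _ _ γ
  agrees : ∀ B : Set X, Bornology.IsBounded B →
    TopologicalSpace.induced ((↑) : B → X) γ = TopologicalSpace.induced ((↑) : B → X) τ
  finest : ∀ γ' : TopologicalSpace X, @IsTopologicalAddGroup X γ' _ →
    @ContinuousSMul ℝ X _ _ γ' →
    (UniformSpace.toTopologicalSpace : TopologicalSpace X) ≤ γ' → γ' ≤ τ →
    (∀ B : Set X, Bornology.IsBounded B →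
      TopologicalSpace.induced ((↑) : B → X) γ' = TopologicalSpace.induced ((↑) : B → X) τ) →
    γ ≤ γ'

/-- A topology `t` on `X` makes `X` a Mazur space if every `t`-sequentially continuous linear
functional is `t`-continuous. -/
def MazurIn (X : Type*) [NormedAddCommGroup X] [NormedSpace ℝ X]
    (t : TopologicalSpace X) : Prop :=
  ∀ f : X →ₗ[ℝ] ℝ,
    (∀ (u : ℕ → X) (x : X), Filter.Tendsto u Filter.atTop (@nhds X t x) →
      Filter.Tendsto (fun n => f (u n)) Filter.atTop (nhds (f x))) →
    @Continuous X ℝ t _ ⇑f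

/-- `(X, ‖·‖, τ)` is a Saks space: `τ` is generated by a directed family of seminorms `p`
with `‖x‖ = sup_i p i x`. -/
def IsSaksSpace (X : Type*) [NormedAddCommGroup X] [NormedSpace ℝ X]
    (τ : TopologicalSpace X) : Prop :=
  ∃ (ι : Type) (hι : Nonempty ι) (p : SeminormFamily ℝ X ι),
    Directed (· ≤ ·) p ∧ @WithSeminorms ℝ X ι _ _ _ p τ ∧
    ∀ x : X, IsLUB (Set.range fun i => p i x) ‖x‖

/-! If `u → l` in `γ` but `u` is unbounded, the norming property yields `τ`-continuous functionals
`g k` with `‖g k‖ ≤ 1/(k+1)` and `k < |g k (u n)|` for some `n`. Since `‖g k‖ → 0`, the map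
`x ↦ (g k x)ₖ` into `ℓ^∞` is, on a norm-bounded set, uniformly approximated by finitely many of its
coordinates, hence `τ`-continuous there. So `τ ⊓ (the topology it induces)` is a linear topology
between the norm topology and `τ` agreeing with `τ` on bounded sets, and is therefore coarser than
`γ`. Then `(g k (u n))ₖ` converges in `ℓ^∞` as `n → ∞`, contradicting `k < |g k (u n)|`.
Conversely, `τ` and `γ` agree on the bounded set `insert l (range u)`. -/

open BoundedContinuousFunction

theorem induced_subtype_inf_induced_eq {X Y : Type*} (τ : TopologicalSpace X)
    [TopologicalSpace Y] {T : X → Y} {B : Set X} (h : @ContinuousOn X Y τ _ T B) :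
    (τ ⊓ .induced T ‹_›).induced ((↑) : B → X) = τ.induced (↑) := by
  rw [induced_inf, inf_eq_left, induced_compose]
  exact continuous_iff_le_induced.1 ((@continuousOn_iff_continuous_domRestrict X Y τ _ _ _).1 h)

theorem tendsto_nhds_of_induced_subtype_eq {X ι : Type*} {t t' : TopologicalSpace X}
    {B : Set X} (h : t.induced ((↑) : B → X) = t'.induced (↑)) {F : Filter ι} {u : ι → X}
    {l : X} (hu : ∀ i, u i ∈ B) (hl : l ∈ B) (ht : Tendsto u F (@nhds X t l)) :
    Tendsto u F (@nhds X t' l) := by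
  have hlift (s : TopologicalSpace X) : Tendsto u F (@nhds X s l) ↔
      Tendsto (fun i => (⟨u i, hu i⟩ : B)) F (@nhds B (s.induced (↑)) ⟨l, hl⟩) := by
    rw [nhds_induced, tendsto_comap_iff]
    rfl
  rw [hlift] at ht ⊢
  rwa [← h]

section

variable {X : Type*} [NormedAddCommGroup X] [NormedSpace ℝ X]

def boundedSeqCLM (g : ℕ → wDualR X) (C : ℝ) (hg : ∀ k, ‖g k‖ ≤ C) : X →L[ℝ] (ℕ →ᵇ ℝ) :=
  LinearMap.mkContinuous
    { toFun := fun x => ofNormedAddCommGroup (fun k => g k x) continuous_of_discreteTopology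
        (C * ‖x‖) fun k => (g k).le_of_opNorm_le (hg k) x
      map_add' := fun x y => by ext k; simp
      map_smul' := fun c x => by ext k; simp }
    C fun x => (norm_le (mul_nonneg ((norm_nonneg _).trans (hg 0)) (norm_nonneg x))).2
      fun k => (g k).le_of_opNorm_le (hg k) x

@[simp]
theorem boundedSeqCLM_apply (g : ℕ → wDualR X) (C : ℝ) (hg : ∀ k, ‖g k‖ ≤ C) (x : X) (k : ℕ) :
    boundedSeqCLM g C hg x k = g k x :=
  rfl

theorem continuousOn_boundedSeqCLM (τ : TopologicalSpace X) {g : ℕ → wDualR X} {C : ℝ}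
    (hg : ∀ k, ‖g k‖ ≤ C) (hgτ : ∀ k, Continuous[τ, _] (g k))
    (hg0 : Tendsto (fun k => ‖g k‖) atTop (𝓝 0)) {B : Set X} (hB : Bornology.IsBounded B) :
    @ContinuousOn X _ τ _ (boundedSeqCLM g C hg) B := by
  let _ := τ
  intro b hb
  obtain ⟨D, hD⟩ := Metric.isBounded_iff.1 hB
  refine Metric.tendsto_nhds.2 fun ε hε => ?_
  obtain ⟨K, hK⟩ := eventually_atTop.1 <|
    (hg0.mul_const D).eventually_lt_const (show 0 * D < ε / 2 by linarith)
  have hhead : ∀ᶠ x in 𝓝 b, ∀ k ∈ Finset.range K, dist (g k x) (g k b) < ε / 2 :=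
    (eventually_all_finset _).2 fun k _ =>
      Metric.tendsto_nhds.1 ((hgτ k).tendsto b) _ (half_pos hε)
  filter_upwards [nhdsWithin_le_nhds hhead, self_mem_nhdsWithin] with x hx hxB
  refine lt_of_le_of_lt ((dist_le (by linarith)).2 fun k => ?_) (half_lt_self hε)
  rw [boundedSeqCLM_apply, boundedSeqCLM_apply]
  rcases lt_or_ge k K with hk | hk
  · exact (hx k (Finset.mem_range.2 hk)).le
  · calc dist (g k x) (g k b) = ‖g k (x - b)‖ := by rw [map_sub, dist_eq_norm]
      _ ≤ ‖g k‖ * ‖x - b‖ := (g k).le_opNorm _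
      _ ≤ ‖g k‖ * D := by gcongr; rw [← dist_eq_norm]; exact hD hxB hb
      _ ≤ ε / 2 := (hK k hk).le

theorem exists_seq_continuous_lt_abs_apply_of_not_isBounded (τ : TopologicalSpace X)
    (hnorming : ∀ x : X,
      IsLUB {r : ℝ | ∃ f : wDualR X, Continuous[τ, _] f ∧ ‖f‖ ≤ 1 ∧ r = |f x|} ‖x‖)
    {S : Set X} (hS : ¬Bornology.IsBounded S) :
    ∃ g : ℕ → wDualR X, (∀ k, Continuous[τ, _] (g k)) ∧ (∀ k, ‖g k‖ ≤ ((k : ℝ) + 1)⁻¹) ∧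
      ∀ k : ℕ, ∃ x ∈ S, (k : ℝ) < |g k x| := by
  have hlarge (k : ℕ) : ∃ g : wDualR X, Continuous[τ, _] g ∧ ‖g‖ ≤ ((k : ℝ) + 1)⁻¹ ∧
      ∃ x ∈ S, (k : ℝ) < |g x| := by
    have hunbounded : ∀ r : ℝ, ∃ x ∈ S, r < ‖x‖ := by
      simpa [isBounded_iff_forall_norm_le] using hS
    obtain ⟨x, hxS, hx⟩ := hunbounded (((k : ℝ) + 1) ^ 2)
    obtain ⟨_, ⟨f, hfτ, hf1, rfl⟩, hfx, -⟩ := (hnorming x).exists_between hx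
    have hk : (0 : ℝ) < (k : ℝ) + 1 := by positivity
    have hgτ : Continuous[τ, _] (((k : ℝ) + 1)⁻¹ • f) := by
      simpa only [FunLike.coe_smul] using hfτ.const_smul ((k : ℝ) + 1)⁻¹
    refine ⟨((k : ℝ) + 1)⁻¹ • f, hgτ, ?_, x, hxS, ?_⟩
    · rw [norm_smul, Real.norm_of_nonneg (inv_nonneg.2 hk.le)]
      exact mul_le_of_le_one_right (inv_nonneg.2 hk.le) hf1
    · rw [FunLike.coe_smul, Pi.smul_apply, smul_eq_mul, abs_mul, abs_inv, abs_of_pos hk,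
        lt_inv_mul_iff₀ hk]
      nlinarith
  choose g hgτ hg hgS using hlarge
  exact ⟨g, hgτ, hg, hgS⟩

theorem IsMixedTopology.continuous_of_continuousOn_isBounded {E : Type*}
    [NormedAddCommGroup E] [NormedSpace ℝ E] (T : X →L[ℝ] E) {τ γ : TopologicalSpace X}
    (hmix : IsMixedTopology X τ γ)
    (hcoarser : (UniformSpace.toTopologicalSpace : TopologicalSpace X) ≤ τ)
    (haddgrp : @IsTopologicalAddGroup X τ _) (hsmul : @ContinuousSMul ℝ X _ _ τ)
    (hT : ∀ B : Set X, Bornology.IsBounded B → @ContinuousOn X E τ _ T B) :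
    Continuous[γ, _] T := by
  have hTnorm :
      (UniformSpace.toTopologicalSpace : TopologicalSpace X) ≤ .induced T inferInstance := by
    let _ : TopologicalSpace X := UniformSpace.toTopologicalSpace
    exact T.continuous.le_induced
  have hγ : γ ≤ τ ⊓ .induced T inferInstance :=
    hmix.finest _ (topologicalAddGroup_inf haddgrp (topologicalAddGroup_induced T))
      (@continuousSMul_inf ℝ X _ _ τ _ hsmul (continuousSMul_induced T))
      (le_inf hcoarser hTnorm) inf_le_left
      fun B hB => induced_subtype_inf_induced_eq τ (hT B hB)
  exact continuous_iff_le_induced.2 (hγ.trans inf_le_right)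

theorem IsMixedTopology.isBounded_range_of_tendsto {τ γ : TopologicalSpace X}
    (hmix : IsMixedTopology X τ γ)
    (hcoarser : (UniformSpace.toTopologicalSpace : TopologicalSpace X) ≤ τ)
    (haddgrp : @IsTopologicalAddGroup X τ _) (hsmul : @ContinuousSMul ℝ X _ _ τ)
    (hnorming : ∀ x : X,
      IsLUB {r : ℝ | ∃ f : wDualR X, Continuous[τ, _] f ∧ ‖f‖ ≤ 1 ∧ r = |f x|} ‖x‖)
    {u : ℕ → X} {l : X} (hu : Tendsto u atTop (@nhds X γ l)) :
    Bornology.IsBounded (Set.range u) := by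
  by_contra hunbdd
  obtain ⟨g, hgτ, hg, hgu⟩ :=
    exists_seq_continuous_lt_abs_apply_of_not_isBounded τ hnorming hunbdd
  have hg1 (k : ℕ) : ‖g k‖ ≤ 1 := (hg k).trans (inv_le_one_of_one_le₀ (by simp))
  have hg0 : Tendsto (fun k => ‖g k‖) atTop (𝓝 0) := by
    refine squeeze_zero (fun k => norm_nonneg _) (fun k => ?_)
      tendsto_one_div_add_atTop_nhds_zero_nat
    simpa using hg k
  have hTγ : Continuous[γ, _] (boundedSeqCLM g 1 hg1) :=
    hmix.continuous_of_continuousOn_isBounded _ hcoarser haddgrp hsmul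
      fun B hB => continuousOn_boundedSeqCLM τ hg1 hgτ hg0 hB
  obtain ⟨M, hM⟩ := isBounded_iff_forall_norm_le.1
    (Metric.isBounded_range_of_tendsto _ ((hTγ.tendsto l).comp hu))
  obtain ⟨k, hk⟩ := exists_nat_ge M
  obtain ⟨_, ⟨n, rfl⟩, hn⟩ := hgu k
  have : |g k (u n)| ≤ M := calc
    |g k (u n)| = ‖boundedSeqCLM g 1 hg1 (u n) k‖ := rfl
    _ ≤ ‖boundedSeqCLM g 1 hg1 (u n)‖ := norm_coe_le_norm _ k
    _ ≤ M := hM _ ⟨n, rfl⟩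
  linarith

end

theorem mixedTopology_tendsto_iff_general
    {X : Type*} [NormedAddCommGroup X] [NormedSpace ℝ X]
    (τ γ : TopologicalSpace X)
    (hcoarser : (UniformSpace.toTopologicalSpace : TopologicalSpace X) ≤ τ)
    (haddgrp : @IsTopologicalAddGroup X τ _)
    (hsmul : @ContinuousSMul ℝ X _ _ τ)
    (hnorming : ∀ x : X,
      IsLUB {r : ℝ | ∃ f : wDualR X, @Continuous X ℝ τ _ ⇑f ∧ ‖f‖ ≤ 1 ∧ r = |f x|} ‖x‖)
    (hmix : IsMixedTopology X τ γ) (u : ℕ → X) (l : X) :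
    Filter.Tendsto u Filter.atTop (@nhds X γ l) ↔
      (Filter.Tendsto u Filter.atTop (@nhds X τ l) ∧ Bornology.IsBounded (Set.range u)) := by
  refine ⟨fun hγ => ⟨hγ.mono_right (nhds_mono hmix.le_tau),
    hmix.isBounded_range_of_tendsto hcoarser haddgrp hsmul hnorming hγ⟩, ?_⟩
  rintro ⟨hτ, hbdd⟩
  exact tendsto_nhds_of_induced_subtype_eq (hmix.agrees _ (hbdd.insert l)).symm
    (fun n => Set.mem_insert_of_mem _ ⟨n, rfl⟩) (Set.mem_insert _ _) hτ

/-- A sequence converges in the mixed topology `γ = γ(‖·‖, τ)` if and only if it converges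
in `τ` and is norm-bounded. -/
theorem mixedTopology_tendsto_iff
    {X : Type*} [NormedAddCommGroup X] [NormedSpace ℝ X] [CompleteSpace X]
    (τ γ : TopologicalSpace X)
    (hcoarser : (UniformSpace.toTopologicalSpace : TopologicalSpace X) ≤ τ)
    (ht2 : @T2Space X τ) (haddgrp : @IsTopologicalAddGroup X τ _)
    (hsmul : @ContinuousSMul ℝ X _ _ τ) (hlc : @LocallyConvexSpace ℝ X _ _ _ _ τ)
    (hnorming : ∀ x : X,
      IsLUB {r : ℝ | ∃ f : wDualR X, @Continuous X ℝ τ _ ⇑f ∧ ‖f‖ ≤ 1 ∧ r = |f x|} ‖x‖)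
    (hmix : IsMixedTopology X τ γ) (u : ℕ → X) (l : X) :
    Filter.Tendsto u Filter.atTop (@nhds X γ l) ↔
      (Filter.Tendsto u Filter.atTop (@nhds X τ l) ∧ Bornology.IsBounded (Set.range u)) :=
  mixedTopology_tendsto_iff_general τ γ hcoarser haddgrp hsmul hnorming hmix u l

end
end

section
/- Let X be a Banach space and τ a coarser Hausdorff locally convex topology with (X,τ)' norming. Then τ is sequentially complete on norm-bounded sets (every norm-bounded τ-Cauchy sequence τ-converges) if and only if (X, γ(‖·‖,τ)) is sequentially complete. -/
noncomputable section

open Filter Topology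

/-!
For norm-bounded sequences nothing is to prove: `γ` and `τ` induce the same topology on bounded
sets, so they have the same bounded Cauchy sequences and the same limits of bounded sequences.
It remains to see that a `γ`-Cauchy sequence `u` is norm-bounded. If not, pick `‖u (n k)‖ >
2 (k + 1)²`, take `τ`-continuous norming functionals `g k` and rescale them to `f k` with
`‖f k‖ ≤ 1 / (k + 1)` and `|f k (u (n k))| > k`. The map `T x = (f k x)ₖ` into `ℓ^∞` is bounded
and, because `‖f k‖ → 0`, `τ`-continuous on bounded sets. Hence `τ ⊓ T⁻¹(ℓ^∞)` is a linear
topology agreeing with `τ` on bounded sets, so it is coarser than `γ` by maximality of `γ`. Thus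
`T` is `γ`-continuous, `T ∘ u` is Cauchy and so bounded in `ℓ^∞`, contradicting
`‖T (u (n k))‖ > k`.
-/

open Set Bornology
open scoped Pointwise BoundedContinuousFunction

section SeqCauchy

variable {X : Type*} [AddCommGroup X] {t t₁ t₂ : TopologicalSpace X} {u : ℕ → X}

theorem seqCauchyIn_iff_tendsto :
    SeqCauchyIn t u ↔ Tendsto (fun p : ℕ × ℕ => u p.1 - u p.2) atTop (@nhds X t 0) := by
  simp only [SeqCauchyIn, tendsto_iff_forall_eventually_mem, eventually_atTop_prod_self']

theorem SeqCauchyIn.mono (h : t₁ ≤ t₂) (hu : SeqCauchyIn t₁ u) : SeqCauchyIn t₂ u :=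
  fun U hU => hu U (nhds_mono h hU)

theorem SeqCauchyIn.cauchySeq_map {E : Type*} [SeminormedAddCommGroup E] (T : X →+ E)
    (hT : Continuous[t, _] T) (hu : SeqCauchyIn t u) : CauchySeq (T ∘ u) := by
  have h := ((hT.tendsto 0).comp (seqCauchyIn_iff_tendsto.1 hu))
  simp only [Function.comp_def, map_sub, map_zero] at h
  simpa [cauchySeq_iff_tendsto_dist_atTop_0, dist_eq_norm] using
    tendsto_zero_iff_norm_tendsto_zero.1 h

end SeqCauchy

section InducedEq

variable {X : Type*} {t₁ t₂ : TopologicalSpace X} {B : Set X}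

theorem tendsto_nhds_iff_of_induced_eq
    (h : TopologicalSpace.induced ((↑) : B → X) t₁ = TopologicalSpace.induced ((↑) : B → X) t₂)
    {α : Type*} {F : Filter α} {u : α → X} {x : X} (hu : ∀ a, u a ∈ B) (hx : x ∈ B) :
    Tendsto u F (@nhds X t₁ x) ↔ Tendsto u F (@nhds X t₂ x) := by
  have key : ∀ t : TopologicalSpace X, Tendsto u F (@nhds X t x) ↔
      Tendsto (fun a => (⟨u a, hu a⟩ : B)) F
        (@nhds B (TopologicalSpace.induced (↑) t) ⟨x, hx⟩) := fun t => by
    rw [nhds_induced, tendsto_comap_iff]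
    rfl
  rw [key t₁, key t₂, h]

theorem seqCauchyIn_iff_of_induced_eq [AddCommGroup X]
    (h : TopologicalSpace.induced ((↑) : B → X) t₁ = TopologicalSpace.induced ((↑) : B → X) t₂)
    {u : ℕ → X} (hu : ∀ m n, u m - u n ∈ B) : SeqCauchyIn t₁ u ↔ SeqCauchyIn t₂ u := by
  simp only [seqCauchyIn_iff_tendsto]
  exact tendsto_nhds_iff_of_induced_eq h (fun p => hu p.1 p.2) (sub_self (u 0) ▸ hu 0 0)

end InducedEq

section BoundedSeqEval

variable {X : Type*} [NormedAddCommGroup X] [NormedSpace ℝ X]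

def boundedSeqEval (f : ℕ → wDualR X) (C : ℝ) (hf : ∀ k, ‖f k‖ ≤ C) : X →ₗ[ℝ] (ℕ →ᵇ ℝ) where
  toFun x := BoundedContinuousFunction.ofNormedAddCommGroupDiscrete (fun k => f k x) (C * ‖x‖)
    fun k => (f k).le_of_opNorm_le (hf k) x
  map_add' x y := by ext k; simp
  map_smul' c x := by ext k; simp

variable {f : ℕ → wDualR X} {C : ℝ} {hf : ∀ k, ‖f k‖ ≤ C}

@[simp]
theorem boundedSeqEval_apply (x : X) (k : ℕ) : boundedSeqEval f C hf x k = f k x := rfl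

theorem norm_boundedSeqEval_le (x : X) : ‖boundedSeqEval f C hf x‖ ≤ C * ‖x‖ :=
  BoundedContinuousFunction.norm_ofNormedAddCommGroup_le _
    (mul_nonneg ((norm_nonneg _).trans (hf 0)) (norm_nonneg x))
    fun k => (f k).le_of_opNorm_le (hf k) x

theorem continuous_boundedSeqEval : Continuous (boundedSeqEval f C hf) :=
  AddMonoidHomClass.continuous_of_bound _ C norm_boundedSeqEval_le

theorem continuous_boundedSeqEval_restrict (hf0 : Tendsto (fun k => ‖f k‖) atTop (𝓝 0))
    {τ : TopologicalSpace X} (hfτ : ∀ k, Continuous[τ, _] (f k)) {B : Set X}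
    (hB : IsBounded B) :
    Continuous[TopologicalSpace.induced ((↑) : B → X) τ, _]
      fun x : B => boundedSeqEval f C hf x := by
  obtain ⟨R, hR⟩ := hB.exists_norm_le
  rw [continuous_iff_continuousAt]
  intro x₀
  refine Metric.tendsto_nhds.2 fun ε hε => ?_
  -- as `‖f k‖ → 0`, on the bounded set `B` only finitely many `f k` matter up to `ε`
  have htail : ∀ᶠ k in atTop, ‖f k‖ * (2 * R) < ε / 2 := by
    refine (hf0.mul_const (2 * R)).eventually (gt_mem_nhds ?_)
    simpa using half_pos hε
  obtain ⟨K, hK⟩ := htail.exists_forall_of_atTop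
  have hhead : ∀ᶠ y : B in @nhds B (TopologicalSpace.induced (↑) τ) x₀,
      ∀ k ∈ {k | k < K}, dist (f k (y : X)) (f k (x₀ : X)) < ε / 2 :=
    (Set.finite_lt_nat K).eventually_all.2 fun k _ =>
      Metric.tendsto_nhds.1 ((hfτ k).comp continuous_induced_dom).continuousAt _ (half_pos hε)
  filter_upwards [hhead] with y hy
  rw [dist_eq_norm, ← map_sub]
  refine lt_of_le_of_lt ((BoundedContinuousFunction.norm_le (half_pos hε).le).2 fun k => ?_)
    (half_lt_self hε)
  rw [boundedSeqEval_apply]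
  rcases lt_or_ge k K with hk | hk
  · simpa [dist_eq_norm] using (hy k hk).le
  · calc ‖f k (y - x₀)‖ ≤ ‖f k‖ * ‖(y : X) - x₀‖ := (f k).le_opNorm _
      _ ≤ ‖f k‖ * (2 * R) := by
        gcongr
        linarith [norm_sub_le (y : X) x₀, hR y y.2, hR x₀ x₀.2]
      _ ≤ ε / 2 := (hK k hk).le

end BoundedSeqEval

theorem exists_functionals_of_not_isBounded {X : Type*} [NormedAddCommGroup X]
    [NormedSpace ℝ X] {τ : TopologicalSpace X}
    (hnorming : ∀ x : X,
      IsLUB {r : ℝ | ∃ f : wDualR X, @Continuous X ℝ τ _ ⇑f ∧ ‖f‖ ≤ 1 ∧ r = |f x|} ‖x‖)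
    {u : ℕ → X} (hu : ¬IsBounded (range u)) :
    ∃ f : ℕ → wDualR X, (∀ k, Continuous[τ, _] (f k)) ∧ (∀ k, ‖f k‖ ≤ 1) ∧
      Tendsto (fun k => ‖f k‖) atTop (𝓝 0) ∧ ∀ k : ℕ, ∃ n, (k : ℝ) < |f k (u n)| := by
  simp only [isBounded_iff_forall_norm_le, forall_mem_range, not_exists, not_forall,
    not_le] at hu
  choose n hn using fun k : ℕ => hu (2 * ((k : ℝ) + 1) ^ 2)
  have hpos : ∀ k, 0 < ‖u (n k)‖ := fun k => lt_trans (by positivity) (hn k)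
  have hg_exists : ∀ k, ∃ g : wDualR X, Continuous[τ, _] g ∧ ‖g‖ ≤ 1 ∧
      ‖u (n k)‖ / 2 < |g (u (n k))| := fun k => by
    obtain ⟨_, ⟨g, hgτ, hg1, rfl⟩, hlt, -⟩ :=
      (hnorming (u (n k))).exists_between (half_lt_self (hpos k))
    exact ⟨g, hgτ, hg1, hlt⟩
  choose g hgτ hg1 hgu using hg_exists
  -- large enough for `|f k (u (n k))| > k + 1`, small enough for `‖f k‖ ≤ 1 / (k + 1)`
  set a : ℕ → ℝ := fun k => 2 * (k + 1) / ‖u (n k)‖ with ha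
  have ha0 : ∀ k, 0 ≤ a k := fun k => by positivity
  have hsmall : ∀ k, ‖a k • g k‖ ≤ 1 / ((k : ℝ) + 1) := fun k => by
    rw [norm_smul, Real.norm_of_nonneg (ha0 k)]
    calc a k * ‖g k‖ ≤ a k := mul_le_of_le_one_right (ha0 k) (hg1 k)
      _ ≤ 1 / ((k : ℝ) + 1) := by
        rw [ha, div_le_div_iff₀ (hpos k) (by positivity)]
        nlinarith [hn k]
  refine ⟨fun k => a k • g k, fun k => (hgτ k).const_smul (a k), fun k => ?_, ?_,
    fun k => ⟨n k, ?_⟩⟩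
  · exact (hsmall k).trans (div_le_one_of_le₀ (by simp) (by positivity))
  · exact squeeze_zero (fun k => norm_nonneg _) hsmall tendsto_one_div_add_atTop_nhds_zero_nat
  · have hval : a k * (‖u (n k)‖ / 2) = k + 1 := by
      rw [ha]
      field_simp [(hpos k).ne']
    calc (k : ℝ) < a k * (‖u (n k)‖ / 2) := by linarith
      _ ≤ |a k • g k (u (n k))| := by
        rw [smul_eq_mul, abs_mul, abs_of_nonneg (ha0 k)]
        exact mul_le_mul_of_nonneg_left (hgu k).le (ha0 k)
      _ = |(a k • g k) (u (n k))| := rfl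

namespace IsMixedTopology

variable {X : Type*} [NormedAddCommGroup X] [NormedSpace ℝ X]

theorem tendsto_nhds_iff {τ γ : TopologicalSpace X} (hmix : IsMixedTopology X τ γ) {u : ℕ → X}
    (hu : IsBounded (range u)) {l : X} :
    Tendsto u atTop (@nhds X γ l) ↔ Tendsto u atTop (@nhds X τ l) :=
  tendsto_nhds_iff_of_induced_eq (hmix.agrees _ (hu.insert l))
    (fun n => mem_insert_of_mem l ⟨n, rfl⟩) (mem_insert l _)

theorem seqCauchyIn_iff {τ γ : TopologicalSpace X} (hmix : IsMixedTopology X τ γ) {u : ℕ → X}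
    (hu : IsBounded (range u)) : SeqCauchyIn γ u ↔ SeqCauchyIn τ u :=
  seqCauchyIn_iff_of_induced_eq (hmix.agrees _ (isBounded_sub hu hu))
    (fun m n => sub_mem_sub ⟨m, rfl⟩ ⟨n, rfl⟩)

-- `hT` is bound before `τ` and `γ`: once these are in scope they are local instances, and
-- would be taken as the topology of `X` in `Continuous T`.
theorem continuous_of_continuous_restrict_isBounded {E : Type*} [NormedAddCommGroup E]
    [NormedSpace ℝ E] {T : X →ₗ[ℝ] E} (hT : Continuous T) {τ γ : TopologicalSpace X}
    (hmix : IsMixedTopology X τ γ) (haddgrp : @IsTopologicalAddGroup X τ _)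
    (hsmul : @ContinuousSMul ℝ X _ _ τ)
    (hTτ : ∀ B : Set X, IsBounded B →
      Continuous[TopologicalSpace.induced ((↑) : B → X) τ, _] fun x : B => T x) :
    Continuous[γ, _] T := by
  let γ' : TopologicalSpace X := τ ⊓ TopologicalSpace.induced T inferInstance
  have hγ : γ ≤ γ' := hmix.finest γ'
    (topologicalAddGroup_inf haddgrp (topologicalAddGroup_induced T))
    (@continuousSMul_inf ℝ X _ _ τ _ hsmul (continuousSMul_induced T))
    (le_inf (hmix.norm_le.trans hmix.le_tau) (continuous_iff_le_induced.1 hT))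
    inf_le_left
    (fun B hB => by
      rw [induced_inf, induced_compose, inf_eq_left, ← continuous_iff_le_induced]
      exact hTτ B hB)
  exact continuous_iff_le_induced.2 (hγ.trans inf_le_right)

theorem isBounded_range_of_seqCauchyIn {τ γ : TopologicalSpace X} (hmix : IsMixedTopology X τ γ)
    (haddgrp : @IsTopologicalAddGroup X τ _) (hsmul : @ContinuousSMul ℝ X _ _ τ)
    (hnorming : ∀ x : X,
      IsLUB {r : ℝ | ∃ f : wDualR X, @Continuous X ℝ τ _ ⇑f ∧ ‖f‖ ≤ 1 ∧ r = |f x|} ‖x‖)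
    {u : ℕ → X} (hu : SeqCauchyIn γ u) : IsBounded (range u) := by
  by_contra hunb
  obtain ⟨f, hfτ, hf1, hf0, hfu⟩ := exists_functionals_of_not_isBounded hnorming hunb
  let T := boundedSeqEval f 1 hf1
  have hTγ : Continuous[γ, _] T :=
    hmix.continuous_of_continuous_restrict_isBounded continuous_boundedSeqEval haddgrp hsmul
      fun _ hB => continuous_boundedSeqEval_restrict hf0 hfτ hB
  obtain ⟨R, hR⟩ := isBounded_iff_forall_norm_le.1
    (hu.cauchySeq_map T.toAddMonoidHom hTγ).isBounded_range
  obtain ⟨k, hRk⟩ := exists_nat_gt R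
  obtain ⟨n, hkn⟩ := hfu k
  have hTu : |f k (u n)| ≤ ‖T (u n)‖ := BoundedContinuousFunction.norm_coe_le_norm (T (u n)) k
  have hTR : ‖T (u n)‖ ≤ R := hR _ ⟨n, rfl⟩
  linarith

end IsMixedTopology

theorem mixedTopology_seqComplete_iff_general
    {X : Type*} [NormedAddCommGroup X] [NormedSpace ℝ X]
    (τ γ : TopologicalSpace X)
    (haddgrp : @IsTopologicalAddGroup X τ _)
    (hsmul : @ContinuousSMul ℝ X _ _ τ)
    (hnorming : ∀ x : X,
      IsLUB {r : ℝ | ∃ f : wDualR X, @Continuous X ℝ τ _ ⇑f ∧ ‖f‖ ≤ 1 ∧ r = |f x|} ‖x‖)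
    (hmix : IsMixedTopology X τ γ) :
    (∀ u : ℕ → X, (∃ C, ∀ n, ‖u n‖ ≤ C) → SeqCauchyIn τ u →
        ∃ l : X, Filter.Tendsto u Filter.atTop (@nhds X τ l)) ↔
      (∀ u : ℕ → X, SeqCauchyIn γ u →
        ∃ l : X, Filter.Tendsto u Filter.atTop (@nhds X γ l)) := by
  constructor
  · intro hτ u hu
    have hb := hmix.isBounded_range_of_seqCauchyIn haddgrp hsmul hnorming hu
    obtain ⟨C, hC⟩ := isBounded_iff_forall_norm_le.1 hb
    obtain ⟨l, hl⟩ := hτ u ⟨C, forall_mem_range.1 hC⟩ (hu.mono hmix.le_tau)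
    exact ⟨l, (hmix.tendsto_nhds_iff hb).2 hl⟩
  · rintro hγ u ⟨C, hC⟩ hu
    have hb : IsBounded (range u) :=
      isBounded_iff_forall_norm_le.2 ⟨C, forall_mem_range.2 hC⟩
    obtain ⟨l, hl⟩ := hγ u ((hmix.seqCauchyIn_iff hb).2 hu)
    exact ⟨l, hl.mono_right (nhds_mono hmix.le_tau)⟩

/-- `τ` is sequentially complete on norm-bounded sets iff `(X, γ(‖·‖,τ))` is sequentially
complete. -/
theorem mixedTopology_seqComplete_iff
    {X : Type*} [NormedAddCommGroup X] [NormedSpace ℝ X] [CompleteSpace X]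
    (τ γ : TopologicalSpace X)
    (hcoarser : (UniformSpace.toTopologicalSpace : TopologicalSpace X) ≤ τ)
    (ht2 : @T2Space X τ) (haddgrp : @IsTopologicalAddGroup X τ _)
    (hsmul : @ContinuousSMul ℝ X _ _ τ) (hlc : @LocallyConvexSpace ℝ X _ _ _ _ τ)
    (hnorming : ∀ x : X,
      IsLUB {r : ℝ | ∃ f : wDualR X, @Continuous X ℝ τ _ ⇑f ∧ ‖f‖ ≤ 1 ∧ r = |f x|} ‖x‖)
    (hmix : IsMixedTopology X τ γ) :
    (∀ u : ℕ → X, (∃ C, ∀ n, ‖u n‖ ≤ C) → SeqCauchyIn τ u →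
        ∃ l : X, Filter.Tendsto u Filter.atTop (@nhds X τ l)) ↔
      (∀ u : ℕ → X, SeqCauchyIn γ u →
        ∃ l : X, Filter.Tendsto u Filter.atTop (@nhds X γ l)) :=
  mixedTopology_seqComplete_iff_general τ γ haddgrp hsmul hnorming hmix

end
end

section
/- Let X be a Banach space and τ a coarser Hausdorff locally convex topology, with γ = γ(‖·‖,τ) the mixed topology. Then the dual (X,γ)' equals the norm-closure in X' of the dual (X,τ)'; in particular (X,γ)' is a norm-closed linear subspace of X' and hence a Banach space. -/
noncomputable section

open Filter Topology

/-!
Every `τ`-continuous functional is `γ`-continuous since `γ ≤ τ`. The `γ`-dual is norm closed: a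
norm limit of `γ`-continuous functionals converges uniformly on bounded sets, so it is
`γ`-continuous on each bounded set, and by maximality of the mixed topology such a functional is
`γ`-continuous. Conversely, let `f` be `γ`-continuous and `ε > 0`. As `γ` and `τ` agree on the
unit ball, `|f| < ε` on `W ∩ B` for an absolutely convex `τ`-neighbourhood `W` of `0` and the unit
ball `B`, whence `|f| ≤ ε (p_W + ‖·‖)` for the gauge `p_W` of `W`. Hahn–Banach splits `f = g + h`
with `|g| ≤ ε p_W` and `|h| ≤ ε ‖·‖`; then `g` is `τ`-continuous and `‖f - g‖ ≤ ε`.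
-/

open Metric

theorem gauge_inter_le_add {E : Type*} [AddCommGroup E] [Module ℝ E] {s t : Set E}
    (hs : AbsConvex ℝ s) (hsa : Absorbent ℝ s) (ht : AbsConvex ℝ t) (hta : Absorbent ℝ t)
    (x : E) : gauge (s ∩ t) x ≤ gauge s x + gauge t x := by
  let p := gaugeSeminorm hs.1 hs.2 hsa + gaugeSeminorm ht.1 ht.2 hta
  have hball : p.ball 0 1 ⊆ s ∩ t := fun y hy => by
    rw [p.mem_ball_zero] at hy
    have hs1 : gauge s y < 1 := (le_add_of_nonneg_right (gauge_nonneg y)).trans_lt hy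
    have ht1 : gauge t y < 1 := (le_add_of_nonneg_left (gauge_nonneg y)).trans_lt hy
    exact ⟨setOfPred_gauge_lt_one_subset_self hs.2 hsa.zero_mem hsa hs1,
      setOfPred_gauge_lt_one_subset_self ht.2 hta.zero_mem hta ht1⟩
  calc gauge (s ∩ t) x ≤ gauge (p.ball 0 1) x :=
        gauge_mono (p.absorbent_ball_zero one_pos) hball x
    _ = gauge s x + gauge t x := congrFun p.gauge_ball x

theorem LinearMap.abs_le_mul_gauge_of_forall_mem {E : Type*} [AddCommGroup E] [Module ℝ E]
    (f : E →ₗ[ℝ] ℝ) {s : Set E} (hs : Absorbent ℝ s) {ε : ℝ} (hε : 0 < ε)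
    (hf : ∀ y ∈ s, |f y| < ε) (x : E) : |f x| ≤ ε * gauge s x := by
  let p : Seminorm ℝ E := ε.toNNReal⁻¹ • (normSeminorm ℝ ℝ).comp f
  have hball : s ⊆ p.ball 0 1 := fun y hy => by
    simpa [p, NNReal.smul_def, hε.le, inv_mul_lt_iff₀ hε] using hf y hy
  have := (congrFun p.gauge_ball x).symm.trans_le (gauge_mono hs hball x)
  simpa [p, NNReal.smul_def, hε.le, inv_mul_le_iff₀ hε] using this

theorem continuous_of_abs_le_mul_gauge {E : Type*} [AddCommGroup E] [Module ℝ E]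
    [TopologicalSpace E] [IsTopologicalAddGroup E] [ContinuousSMul ℝ E] {F : Type*}
    [FunLike F E ℝ] [AddMonoidHomClass F E ℝ] (f : F)
    {s : Set E} (hs : s ∈ 𝓝 0) {C : ℝ} (hf : ∀ x, |f x| ≤ C * gauge s x) : Continuous f :=
  continuous_of_tendsto_nhds_zero f <| squeeze_zero_norm hf <| by
    simpa using (tendsto_gauge_nhds_zero hs).const_mul C

/-- Hahn–Banach on `E × E`: extend `(x, x) ↦ f x` from the diagonal under the seminorm
`(x, y) ↦ p x + q y`, and restrict the extension to the two factors. -/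
theorem LinearMap.exists_abs_le_of_le_add {E : Type*} [AddCommGroup E] [Module ℝ E]
    (f : E →ₗ[ℝ] ℝ) (p q : Seminorm ℝ E) (hf : ∀ x, f x ≤ p x + q x) :
    ∃ g : E →ₗ[ℝ] ℝ, (∀ x, |g x| ≤ p x) ∧ ∀ x, |f x - g x| ≤ q x := by
  let diag : Submodule ℝ (E × E) := LinearMap.range (LinearMap.id.prod LinearMap.id)
  let N : Seminorm ℝ (E × E) := p.comp (LinearMap.fst ℝ E E) + q.comp (LinearMap.snd ℝ E E)
  obtain ⟨G, hG, hGN⟩ := Module.Dual.exists_extension_of_le_seminorm_real diag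
    ((f.comp (LinearMap.fst ℝ E E)).domRestrict diag) (p := N) <| by
      rintro ⟨_, x, rfl⟩
      exact hf x
  refine ⟨G.comp (LinearMap.inl ℝ E E), fun x => by simpa [N] using hGN (x, 0), fun x => ?_⟩
  have hdiag : G (x, x) = f x := hG ⟨(x, x), x, rfl⟩
  have hsplit : f x - G (x, 0) = G (0, x) := by
    have : ((0 : E), x) = (x, x) - (x, 0) := by simp
    rw [this, map_sub, hdiag]
  simpa [N, hsplit] using hGN (0, x)

theorem nhdsWithin_eq_of_induced_eq {α : Type*} {t t' : TopologicalSpace α} {B : Set α}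
    (h : TopologicalSpace.induced ((↑) : B → α) t = TopologicalSpace.induced ((↑) : B → α) t')
    {x : α} (hx : x ∈ B) : @nhdsWithin α t x B = @nhdsWithin α t' x B := by
  rw [@nhdsWithin_eq_map_subtype_coe α t _ _ hx, @nhdsWithin_eq_map_subtype_coe α t' _ _ hx]
  exact congrArg (fun s => map ((↑) : B → α) (@nhds B s ⟨x, hx⟩)) h

theorem ContinuousLinearMap.exists_abs_le_mul_gauge_of_abs_lt {X : Type*}
    [NormedAddCommGroup X] [NormedSpace ℝ X] (f : X →L[ℝ] ℝ) {W : Set X} (hW : W ∈ 𝓝 0)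
    (hWc : AbsConvex ℝ W) {ε : ℝ} (hε : 0 < ε) (hf : ∀ y ∈ W ∩ ball 0 1, |f y| < ε) :
    ∃ g : X →L[ℝ] ℝ, (∀ x, |g x| ≤ ε * gauge W x) ∧ ‖f - g‖ ≤ ε := by
  have hWa : Absorbent ℝ W := absorbent_nhds_zero hW
  have hbound : ∀ x, |f x| ≤ ε * ‖x‖ + ε * gauge W x := fun x =>
    calc |f x| ≤ ε * gauge (W ∩ ball 0 1) x :=
          (f : X →ₗ[ℝ] ℝ).abs_le_mul_gauge_of_forall_mem
            (absorbent_nhds_zero (inter_mem hW (ball_mem_nhds 0 one_pos))) hε hf x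
      _ ≤ ε * (gauge W x + gauge (ball (0 : X) 1) x) := by
          gcongr
          exact gauge_inter_le_add hWc hWa ⟨balanced_ball_zero, convex_ball 0 1⟩
            (absorbent_nhds_zero (ball_mem_nhds 0 one_pos)) x
      _ = ε * ‖x‖ + ε * gauge W x := by rw [gauge_unit_ball]; ring
  obtain ⟨h, hh, hfh⟩ := (f : X →ₗ[ℝ] ℝ).exists_abs_le_of_le_add
    (ε.toNNReal • normSeminorm ℝ X) (ε.toNNReal • gaugeSeminorm hWc.1 hWc.2 hWa)
    (fun x => by simpa [NNReal.smul_def, hε.le] using (le_abs_self _).trans (hbound x))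
  refine ⟨f - h.mkContinuous ε fun x => by simpa [NNReal.smul_def, hε.le] using hh x,
    fun x => by simpa [NNReal.smul_def, hε.le] using hfh x, ?_⟩
  simpa using LinearMap.mkContinuous_norm_le _ hε.le _

theorem ContinuousLinearMap.tendstoUniformlyOn_nhds_of_isBounded {𝕜 E F : Type*}
    [NontriviallyNormedField 𝕜] [SeminormedAddCommGroup E] [NormedSpace 𝕜 E]
    [SeminormedAddCommGroup F] [NormedSpace 𝕜 F] (f : E →L[𝕜] F) {B : Set E}
    (hB : Bornology.IsBounded B) : TendstoUniformlyOn (fun g : E →L[𝕜] F => ⇑g) f (𝓝 f) B := by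
  obtain ⟨R, hR, hRB⟩ := hB.exists_pos_norm_le
  rw [tendstoUniformlyOn_iff]
  intro ε hε
  filter_upwards [ball_mem_nhds f (div_pos hε hR)] with g hg x hx
  rw [mem_ball, dist_comm, dist_eq_norm, lt_div_iff₀ hR] at hg
  calc dist (f x) (g x) = ‖(f - g) x‖ := by rw [dist_eq_norm, sub_apply]
    _ ≤ ‖f - g‖ * ‖x‖ := le_opNorm _ _
    _ ≤ ‖f - g‖ * R := by gcongr; exact hRB x hx
    _ < ε := hg

namespace IsMixedTopology

variable {X : Type*} [NormedAddCommGroup X] [NormedSpace ℝ X] {τ γ : TopologicalSpace X}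

/-- `γ ⊓ induced f` satisfies the hypotheses of `IsMixedTopology.finest`, hence `γ ≤ induced f`. -/
theorem continuous_of_continuousOn_isBounded_s4 (hmix : IsMixedTopology X τ γ) (f : wDualR X)
    (hf : ∀ B : Set X, Bornology.IsBounded B → @ContinuousOn X ℝ γ _ f B) :
    Continuous[γ, _] f := by
  have hγf : γ ≤ γ ⊓ TopologicalSpace.induced f inferInstance := by
    refine hmix.finest _
      (topologicalAddGroup_inf hmix.addGroup (topologicalAddGroup_induced (f : X →+ ℝ)))
      (@continuousSMul_inf _ _ _ _ γ _ hmix.contSMul (continuousSMul_induced (f : X →ₗ[ℝ] ℝ)))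
      (le_inf hmix.norm_le f.lipschitz.continuous.le_induced) (inf_le_left.trans hmix.le_tau)
      fun B hB => ?_
    have hfB := (@continuousOn_iff_continuous_domRestrict X ℝ γ _ f B).1 (hf B hB)
    rw [induced_inf, induced_compose, ← hmix.agrees B hB]
    exact inf_eq_left.2 hfB.le_induced
  exact continuous_iff_le_induced.2 (hγf.trans inf_le_right)

theorem isClosed_setOf_continuous (hmix : IsMixedTopology X τ γ) :
    IsClosed {f : wDualR X | Continuous[γ, _] f} := by
  refine isClosed_of_closure_subset fun f hf => ?_
  refine hmix.continuous_of_continuousOn_isBounded_s4 f fun B hB => ?_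
  exact @TendstoUniformlyOn.continuousOn X ℝ (wDualR X) γ _ _ _ _ _
    (f.tendstoUniformlyOn_nhds_of_isBounded hB)
    ((mem_closure_iff_frequently.1 hf).mono fun g hg => hg.continuousOn)

theorem exists_absConvex_nhds_abs_lt (hmix : IsMixedTopology X τ γ)
    (hsmul : @ContinuousSMul ℝ X _ _ τ) (hlc : @LocallyConvexSpace ℝ X _ _ _ _ τ)
    {f : wDualR X} (hf : Continuous[γ, _] f) {ε : ℝ} (hε : 0 < ε) :
    ∃ W ∈ @nhds X τ 0, AbsConvex ℝ W ∧ ∀ y ∈ W ∩ ball 0 1, |f y| < ε := by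
  have hV : f ⁻¹' ball 0 ε ∈ @nhds X γ 0 :=
    (map_zero f ▸ hf.tendsto 0) (ball_mem_nhds 0 hε)
  have hVB := @mem_nhdsWithin_of_mem_nhds X γ _ (ball 0 1) _ hV
  rw [nhdsWithin_eq_of_induced_eq (hmix.agrees _ isBounded_ball) (mem_ball_self one_pos)] at hVB
  obtain ⟨W', hW', hW'V⟩ := (@mem_nhdsWithin_iff_exists_mem_nhds_inter X τ _ _ _).1 hVB
  obtain ⟨W, ⟨hW, hWc⟩, hWW'⟩ := (@nhds_hasBasis_absConvex ℝ X _ _ _ _ τ hlc hsmul).mem_iff.1 hW'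
  exact ⟨W, hW, hWc, fun y hy => by simpa using hW'V ⟨hWW' hy.1, hy.2⟩⟩

theorem setOf_continuous_subset_closure (hmix : IsMixedTopology X τ γ)
    (haddgrp : @IsTopologicalAddGroup X τ _) (hsmul : @ContinuousSMul ℝ X _ _ τ)
    (hlc : @LocallyConvexSpace ℝ X _ _ _ _ τ) :
    {f : wDualR X | Continuous[γ, _] f} ⊆ closure {f : wDualR X | Continuous[τ, _] f} := by
  intro f hf
  refine (mem_closure_iff_nhds_basis nhds_basis_closedBall).2 fun ε hε => ?_
  obtain ⟨W, hW, hWc, hfW⟩ := hmix.exists_absConvex_nhds_abs_lt hsmul hlc hf hε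
  obtain ⟨g, hgW, hfg⟩ := f.exists_abs_le_mul_gauge_of_abs_lt
    (nhds_mono (hmix.norm_le.trans hmix.le_tau) hW) hWc hε hfW
  have hgτ : Continuous[τ, _] g :=
    @continuous_of_abs_le_mul_gauge X _ _ τ haddgrp hsmul _ _ _ g W hW ε hgW
  exact ⟨g, hgτ, by rwa [mem_closedBall, dist_comm, dist_eq_norm]⟩

end IsMixedTopology

theorem mixedTopology_dual_eq_closure_general
    {X : Type*} [NormedAddCommGroup X] [NormedSpace ℝ X]
    (τ γ : TopologicalSpace X)
    (haddgrp : @IsTopologicalAddGroup X τ _)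
    (hsmul : @ContinuousSMul ℝ X _ _ τ) (hlc : @LocallyConvexSpace ℝ X _ _ _ _ τ)
    (hmix : IsMixedTopology X τ γ) :
    {f : wDualR X | @Continuous X ℝ γ _ ⇑f} =
        closure {f : wDualR X | @Continuous X ℝ τ _ ⇑f} ∧
      IsClosed {f : wDualR X | @Continuous X ℝ γ _ ⇑f} := by
  have hclosed := hmix.isClosed_setOf_continuous
  exact ⟨(hmix.setOf_continuous_subset_closure haddgrp hsmul hlc).antisymm
    (closure_minimal (fun f hf => continuous_le_dom hmix.le_tau hf) hclosed), hclosed⟩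

/-- The dual of `(X,γ)` for the mixed topology `γ = γ(‖·‖,τ)` is the norm-closure in `X'`
of the dual of `(X,τ)`; in particular it is a norm-closed subspace of `X'`. -/
theorem mixedTopology_dual_eq_closure
    {X : Type*} [NormedAddCommGroup X] [NormedSpace ℝ X] [CompleteSpace X]
    (τ γ : TopologicalSpace X)
    (hcoarser : (UniformSpace.toTopologicalSpace : TopologicalSpace X) ≤ τ)
    (ht2 : @T2Space X τ) (haddgrp : @IsTopologicalAddGroup X τ _)
    (hsmul : @ContinuousSMul ℝ X _ _ τ) (hlc : @LocallyConvexSpace ℝ X _ _ _ _ τ)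
    (hmix : IsMixedTopology X τ γ) :
    {f : wDualR X | @Continuous X ℝ γ _ ⇑f} =
        closure {f : wDualR X | @Continuous X ℝ τ _ ⇑f} ∧
      IsClosed {f : wDualR X | @Continuous X ℝ γ _ ⇑f} :=
  mixedTopology_dual_eq_closure_general τ γ haddgrp hsmul hlc hmix

end
end
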